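/- Let p be an odd prime and Fp = ZMod p. Let T ⊆ GL_3(Fp) be the set of matrices [[1, 0, r₁], [r₁, 1, r₂], [0, 0, 1]] for r₁, r₂ ∈ Fp. Then the number of distinct sets of the form { Q_P·M·Q_P⁻¹ : M ∈ T }, as P ranges over GL_2(Fp) and Q_P = [[P,0],[0,1]] ∈ GL_3(Fp), equals p² − 1. -/
import Mathlib


open Matrix

/-- The block matrix `Q = [[P, 0], [0, 1]]`. -/
def QofP (p n : ℕ) (P : Matrix (Fin n) (Fin n) (ZMod p)) :
    Matrix (Fin (n + 1)) (Fin (n + 1)) (ZMod p) :=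
  Matrix.reindex finSumFinEquiv finSumFinEquiv
    (Matrix.fromBlocks P 0 0 (1 : Matrix (Fin 1) (Fin 1) (ZMod p)))

lemma QofP_eq (p : ℕ) (P : Matrix (Fin 2) (Fin 2) (ZMod p)) :
    QofP p 2 P = !![P 0 0, P 0 1, 0; P 1 0, P 1 1, 0; 0, 0, 1] := by
  ext i j
  fin_cases i <;> fin_cases j <;>
    simp [QofP, Matrix.fromBlocks, finSumFinEquiv, Fin.addCases] <;> rfl

lemma QofP_mul (p : ℕ) (P R : Matrix (Fin 2) (Fin 2) (ZMod p)) :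
    QofP p 2 (P * R) = QofP p 2 P * QofP p 2 R := by
  simp only [QofP_eq]
  ext i j
  fin_cases i <;> fin_cases j <;>
    simp [Matrix.mul_apply, Fin.sum_univ_succ, Matrix.vecHead, Matrix.vecTail]

lemma QofP_one (p : ℕ) : QofP p 2 1 = 1 := by
  rw [QofP_eq]
  ext i j
  fin_cases i <;> fin_cases j <;> simp [Matrix.one_apply, Matrix.vecHead, Matrix.vecTail]

def Mr (p : ℕ) (r₁ r₂ : ZMod p) : Matrix (Fin 3) (Fin 3) (ZMod p) :=
  !![1, 0, r₁; r₁, 1, r₂; 0, 0, 1]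

def Tset (p : ℕ) : Set (Matrix (Fin 3) (Fin 3) (ZMod p)) :=
  { M | ∃ r₁ r₂ : ZMod p, M = !![1, 0, r₁; r₁, 1, r₂; 0, 0, 1] }

lemma Qmul_inv (p : ℕ) (g : GL (Fin 2) (ZMod p)) :
    QofP p 2 ↑g * QofP p 2 ↑(g⁻¹) = 1 := by
  rw [← QofP_mul, ← Units.val_mul, mul_inv_cancel, Units.val_one, QofP_one]

lemma Qinv_mul (p : ℕ) (g : GL (Fin 2) (ZMod p)) :
    QofP p 2 ↑(g⁻¹) * QofP p 2 ↑g = 1 := by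
  rw [← QofP_mul, ← Units.val_mul, inv_mul_cancel, Units.val_one, QofP_one]

lemma QofP_inv (p : ℕ) (g : GL (Fin 2) (ZMod p)) :
    (QofP p 2 ↑g)⁻¹ = QofP p 2 ↑(g⁻¹) :=
  Matrix.inv_eq_right_inv (Qmul_inv p g)

instance stmtSMul (p : ℕ) : SMul (GL (Fin 2) (ZMod p)) (Set (Matrix (Fin 3) (Fin 3) (ZMod p))) :=
  ⟨fun g S => (fun M => QofP p 2 ↑g * M * QofP p 2 ↑(g⁻¹)) '' S⟩

lemma smul_def' (p : ℕ) (g : GL (Fin 2) (ZMod p)) (S : Set (Matrix (Fin 3) (Fin 3) (ZMod p))) :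
    g • S = (fun M => QofP p 2 ↑g * M * QofP p 2 ↑(g⁻¹)) '' S := rfl

instance stmtMulAction (p : ℕ) :
    MulAction (GL (Fin 2) (ZMod p)) (Set (Matrix (Fin 3) (Fin 3) (ZMod p))) where
  one_smul S := by
    rw [smul_def']
    simp [QofP_one]
  mul_smul g h S := by
    rw [smul_def', smul_def', smul_def', ← Set.image_comp]
    apply congrFun
    apply congrArg
    funext M
    simp only [Function.comp, _root_.mul_inv_rev, Units.val_mul, QofP_mul, mul_assoc]

lemma conj_eq (p : ℕ) (g : GL (Fin 2) (ZMod p))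
    (hb : (↑g : Matrix (Fin 2) (Fin 2) (ZMod p)) 0 1 = 0)
    (hd : (↑g : Matrix (Fin 2) (Fin 2) (ZMod p)) 1 1 =
      ((↑g : Matrix (Fin 2) (Fin 2) (ZMod p)) 0 0) ^ 2) (r₁ r₂ : ZMod p) :
    QofP p 2 ↑g * Mr p r₁ r₂ * QofP p 2 ↑(g⁻¹) =
      Mr p ((↑g : Matrix (Fin 2) (Fin 2) (ZMod p)) 0 0 * r₁)
        ((↑g : Matrix (Fin 2) (Fin 2) (ZMod p)) 1 0 * r₁ +
          ((↑g : Matrix (Fin 2) (Fin 2) (ZMod p)) 0 0) ^ 2 * r₂) := by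
  have key : QofP p 2 ↑g * Mr p r₁ r₂ =
      Mr p ((↑g : Matrix (Fin 2) (Fin 2) (ZMod p)) 0 0 * r₁)
        ((↑g : Matrix (Fin 2) (Fin 2) (ZMod p)) 1 0 * r₁ +
          ((↑g : Matrix (Fin 2) (Fin 2) (ZMod p)) 0 0) ^ 2 * r₂) * QofP p 2 ↑g := by
    rw [QofP_eq]
    ext i j
    fin_cases i <;> fin_cases j <;>
      simp [Mr, Matrix.mul_apply, Fin.sum_univ_succ, Matrix.vecHead, Matrix.vecTail, hb, hd] <;>
      ring
  rw [key, mul_assoc, Qmul_inv, mul_one]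

lemma diag_ne_zero (p : ℕ) [Fact p.Prime] (g : GL (Fin 2) (ZMod p))
    (hb : (↑g : Matrix (Fin 2) (Fin 2) (ZMod p)) 0 1 = 0)
    (hd : (↑g : Matrix (Fin 2) (Fin 2) (ZMod p)) 1 1 =
      ((↑g : Matrix (Fin 2) (Fin 2) (ZMod p)) 0 0) ^ 2) :
    (↑g : Matrix (Fin 2) (Fin 2) (ZMod p)) 0 0 ≠ 0 := by
  intro h0
  have hdet : IsUnit (↑g : Matrix (Fin 2) (Fin 2) (ZMod p)).det :=
    (Matrix.isUnit_iff_isUnit_det _).mp ⟨g, rfl⟩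
  have hdet0 : (↑g : Matrix (Fin 2) (Fin 2) (ZMod p)).det = 0 := by
    rw [Matrix.det_fin_two, hb, hd, h0]; ring
  exact hdet.ne_zero hdet0

lemma mem_stab_iff (p : ℕ) [Fact p.Prime] (g : GL (Fin 2) (ZMod p)) :
    g ∈ MulAction.stabilizer (GL (Fin 2) (ZMod p)) (Tset p) ↔
      (↑g : Matrix (Fin 2) (Fin 2) (ZMod p)) 0 1 = 0 ∧
        (↑g : Matrix (Fin 2) (Fin 2) (ZMod p)) 1 1 =
          ((↑g : Matrix (Fin 2) (Fin 2) (ZMod p)) 0 0) ^ 2 := by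
  constructor
  · intro h
    have h' : g • Tset p = Tset p := h
    have hmem : QofP p 2 ↑g * Mr p 1 0 * QofP p 2 ↑(g⁻¹) ∈ Tset p := by
      rw [← h', smul_def']
      exact ⟨Mr p 1 0, ⟨1, 0, rfl⟩, rfl⟩
    obtain ⟨s₁, s₂, hs⟩ := hmem
    have E : QofP p 2 ↑g * Mr p 1 0 = Mr p s₁ s₂ * QofP p 2 ↑g := by
      have h2 := congrArg (fun X => X * QofP p 2 ↑g) hs
      simp only [mul_assoc, Qinv_mul, mul_one] at h2
      exact h2
    rw [QofP_eq] at E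
    have e00 := congrFun (congrFun E 0) 0
    have e02 := congrFun (congrFun E 0) 2
    have e10 := congrFun (congrFun E 1) 0
    simp [Mr, Matrix.mul_apply, Fin.sum_univ_succ, Matrix.vecHead, Matrix.vecTail]
      at e00 e02 e10
    constructor
    · linear_combination e00
    · linear_combination e10 - ((↑g : Matrix (Fin 2) (Fin 2) (ZMod p)) 0 0) * e02
  · rintro ⟨hb, hd⟩
    have ha := diag_ne_zero p g hb hd
    show g • Tset p = Tset p
    rw [smul_def']
    apply Set.Subset.antisymm
    · rintro X ⟨M, ⟨r₁, r₂, rfl⟩, rfl⟩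
      exact ⟨_, _, conj_eq p g hb hd r₁ r₂⟩
    · rintro X ⟨s₁, s₂, rfl⟩
      set a := (↑g : Matrix (Fin 2) (Fin 2) (ZMod p)) 0 0 with haa
      set c := (↑g : Matrix (Fin 2) (Fin 2) (ZMod p)) 1 0 with hcc
      refine ⟨Mr p (a⁻¹ * s₁) ((a ^ 2)⁻¹ * (s₂ - c * (a⁻¹ * s₁))), ⟨_, _, rfl⟩, ?_⟩
      show QofP p 2 ↑g * Mr p _ _ * QofP p 2 ↑(g⁻¹) = _
      rw [conj_eq p g hb hd]
      have h1 : a * (a⁻¹ * s₁) = s₁ := by field_simp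
      have h2 : c * (a⁻¹ * s₁) + a ^ 2 * ((a ^ 2)⁻¹ * (s₂ - c * (a⁻¹ * s₁))) = s₂ := by
        field_simp
        ring
      rw [← haa, ← hcc, h1, h2]
      rfl

noncomputable def stabEquiv (p : ℕ) [Fact p.Prime] :
    MulAction.stabilizer (GL (Fin 2) (ZMod p)) (Tset p) ≃ (ZMod p)ˣ × ZMod p where
  toFun g := ⟨Units.mk0 ((↑g.1 : Matrix (Fin 2) (Fin 2) (ZMod p)) 0 0)
      (diag_ne_zero p g.1 ((mem_stab_iff p g.1).mp g.2).1 ((mem_stab_iff p g.1).mp g.2).2),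
    (↑g.1 : Matrix (Fin 2) (Fin 2) (ZMod p)) 1 0⟩
  invFun x := ⟨((Matrix.isUnit_iff_isUnit_det
      (!![(x.1 : ZMod p), 0; x.2, (x.1 : ZMod p) ^ 2])).mpr
      (by rw [Matrix.det_fin_two_of]
          have h3 : (x.1 : ZMod p) * (x.1 : ZMod p) ^ 2 - 0 * x.2 = (x.1 : ZMod p) ^ 3 := by ring
          rw [h3]
          exact x.1.isUnit.pow 3)).unit,
    by
      rw [mem_stab_iff]
      constructor <;> simp [IsUnit.unit_spec]⟩
  left_inv g := by
    apply Subtype.ext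
    apply Units.ext
    have hb := ((mem_stab_iff p g.1).mp g.2).1
    have hd := ((mem_stab_iff p g.1).mp g.2).2
    show (_ : Matrix (Fin 2) (Fin 2) (ZMod p)) = _
    rw [IsUnit.unit_spec]
    ext i j
    fin_cases i <;> fin_cases j <;>
      simp [Matrix.vecHead, Matrix.vecTail, hb.symm, hd.symm]
  right_inv x := by
    apply Prod.ext
    · apply Units.ext
      show (_ : ZMod p) = _
      simp [IsUnit.unit_spec]
    · show (_ : ZMod p) = _
      simp [IsUnit.unit_spec]

/-- For `T = { [[1,0,r₁],[r₁,1,r₂],[0,0,1]] : r₁, r₂ ∈ Fp }`, the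
number of distinct sets `Q_P·T·Q_P⁻¹` for `P ∈ GL_2(Fp)` is `p² - 1`. -/
theorem stmt_11 (p : ℕ) (hp : p.Prime) (hodd : Odd p) :
    Nat.card (Set.range fun P : GL (Fin 2) (ZMod p) =>
        (fun M => QofP p 2 (P : Matrix (Fin 2) (Fin 2) (ZMod p)) * M *
            (QofP p 2 (P : Matrix (Fin 2) (Fin 2) (ZMod p)))⁻¹) ''
          { M | ∃ r₁ r₂ : ZMod p, M = !![1, 0, r₁; r₁, 1, r₂; 0, 0, 1] }) =
      p ^ 2 - 1 := by
  haveI : Fact p.Prime := ⟨hp⟩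
  have hfe : (fun P : GL (Fin 2) (ZMod p) =>
      (fun M => QofP p 2 (P : Matrix (Fin 2) (Fin 2) (ZMod p)) * M *
          (QofP p 2 (P : Matrix (Fin 2) (Fin 2) (ZMod p)))⁻¹) ''
        { M | ∃ r₁ r₂ : ZMod p, M = !![1, 0, r₁; r₁, 1, r₂; 0, 0, 1] }) =
      fun P => P • Tset p := by
    funext P
    rw [QofP_inv, smul_def']
    rfl
  rw [hfe]
  have horb : Set.range (fun P : GL (Fin 2) (ZMod p) => P • Tset p) =
      MulAction.orbit (GL (Fin 2) (ZMod p)) (Tset p) := rfl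
  rw [horb]
  have key := Nat.card_congr
    (MulAction.orbitProdStabilizerEquivGroup (GL (Fin 2) (ZMod p)) (Tset p))
  rw [Nat.card_prod] at key
  have hstab : Nat.card (MulAction.stabilizer (GL (Fin 2) (ZMod p)) (Tset p)) = (p - 1) * p := by
    rw [Nat.card_congr (stabEquiv p), Nat.card_prod, Nat.card_eq_fintype_card,
      ZMod.card_units, Nat.card_eq_fintype_card, ZMod.card]
  have hG : Nat.card (GL (Fin 2) (ZMod p)) = (p ^ 2 - 1) * (p ^ 2 - p) := by
    rw [Matrix.card_GL_field, Fin.prod_univ_two]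
    simp [ZMod.card]
  rw [hstab, hG] at key
  have hps : p ^ 2 - p = (p - 1) * p := by
    rw [pow_two, tsub_mul, one_mul]
  rw [hps] at key
  have hpos : 0 < (p - 1) * p := Nat.mul_pos (by have := hp.two_le; omega) hp.pos
  exact Nat.eq_of_mul_eq_mul_right hpos key
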